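/- The orthogonality relation Σ_{k=j}^{n} W_{m,r}[n,k]_q · w_{m,r}[k,j]_q = δ_{nj} holds for all integers n ≥ j ≥ 0, where δ_{nj} = 1 if n = j and δ_{nj} = 0 otherwise. -/

import Mathlib

/-!
Let `P_k = ∏_{i<k} q^{-(r+im)} (X - [r+im]_q)`, so that `w_{m,r}[k,j]_q` is the coefficient of
`X^j` in `P_k`. Multiplying by `X` gives `X P_k = q^{mk+r} P_{k+1} + [mk+r]_q P_k`, which is
exactly the recurrence of `W_{m,r}`; hence `X^n = ∑_k W_{m,r}[n,k]_q P_k`. Comparing the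
coefficients of `X^j` on both sides gives the orthogonality relation.
-/

open Finset

/-- The `q`-integer `[s]_q = (q^s - 1)/(q - 1)` for an integer `s`. -/
noncomputable def qint (q : ℝ) (s : ℤ) : ℝ := (q ^ s - 1) / (q - 1)

/-- The `(q,r)`-Whitney numbers of the second kind `W_{m,r}[n,k]_q`, with `r : ℤ` so
that both `W_{m,r}` and `W_{m,-r}` are covered: `W[0,0] = 1`, `W[n,k] = 0` for `k > n`,
and `W[n,k] = q^(m(k-1)+r) W[n-1,k-1] + [mk+r]_q W[n-1,k]`. -/
noncomputable def qWhitney2 (q : ℝ) (m : ℕ) (r : ℤ) : ℕ → ℕ → ℝ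
  | 0, 0 => 1
  | 0, _ + 1 => 0
  | n + 1, 0 => qint q r * qWhitney2 q m r n 0
  | n + 1, k + 1 =>
      q ^ (m * k + r) * qWhitney2 q m r n k
        + qint q (m * (k + 1) + r) * qWhitney2 q m r n (k + 1)

open Polynomial

theorem qWhitney2_eq_zero_of_lt (q : ℝ) (m : ℕ) (r : ℤ) {n k : ℕ} (h : n < k) :
    qWhitney2 q m r n k = 0 := by
  induction n generalizing k with
  | zero => obtain ⟨k, rfl⟩ := Nat.exists_eq_succ_of_ne_zero h.ne'; rfl
  | succ n ih =>
    obtain ⟨k, rfl⟩ := Nat.exists_eq_succ_of_ne_zero (Nat.ne_zero_of_lt h)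
    rw [qWhitney2, ih (by omega), ih (by omega), mul_zero, mul_zero, add_zero]

noncomputable def qWhitneyBasis (q : ℝ) (m : ℕ) (r : ℤ) (k : ℕ) : ℝ[X] :=
  ∏ i ∈ range k, C (q ^ (-(r + i * m))) * (X - C (qint q (r + i * m)))

theorem qWhitneyBasis_succ (q : ℝ) (m : ℕ) (r : ℤ) (k : ℕ) :
    qWhitneyBasis q m r (k + 1) =
      qWhitneyBasis q m r k * (C (q ^ (-(r + k * m))) * (X - C (qint q (r + k * m)))) :=
  prod_range_succ _ _

theorem X_mul_qWhitneyBasis {q : ℝ} (hq : q ≠ 0) (m : ℕ) (r : ℤ) (k : ℕ) :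
    X * qWhitneyBasis q m r k =
      C (q ^ (m * k + r)) * qWhitneyBasis q m r (k + 1)
        + C (qint q (m * k + r)) * qWhitneyBasis q m r k := by
  have hexp : (m * k + r : ℤ) = r + k * m := by ring
  have hinv : C (q ^ (r + k * m)) * C (q ^ (-(r + k * m))) = 1 := by
    rw [← C_mul, ← zpow_add₀ hq, add_neg_cancel, zpow_zero, C_1]
  rw [qWhitneyBasis_succ, hexp]
  linear_combination -(X - C (qint q (r + k * m))) * qWhitneyBasis q m r k * hinv

theorem X_pow_eq_sum_qWhitney2_mul_qWhitneyBasis {q : ℝ} (hq : q ≠ 0) (m : ℕ) (r : ℤ)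
    (n : ℕ) :
    X ^ n = ∑ k ∈ range (n + 1), C (qWhitney2 q m r n k) * qWhitneyBasis q m r k := by
  induction n with
  | zero => simp [qWhitney2, qWhitneyBasis]
  | succ n ih =>
    set W := qWhitney2 q m r
    set P := qWhitneyBasis q m r
    have hreindex : ∑ k ∈ range (n + 1), C (qint q (m * k + r) * W n k) * P k =
        C (qint q r * W n 0) * P 0
          + ∑ k ∈ range (n + 1), C (qint q (m * (k + 1) + r) * W n (k + 1)) * P (k + 1) := by
      calc _ = ∑ k ∈ range (n + 2), C (qint q (m * k + r) * W n k) * P k := by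
            have hvanish : W n (n + 1) = 0 := qWhitney2_eq_zero_of_lt q m r (lt_add_one n)
            rw [sum_range_succ _ (n + 1), hvanish]
            simp
        _ = _ := by rw [sum_range_succ', add_comm]; push_cast; simp
    calc X ^ (n + 1) = ∑ k ∈ range (n + 1), C (W n k) * (X * P k) := by
          rw [pow_succ', ih, mul_sum]; exact sum_congr rfl fun k _ => by ring
      _ = ∑ k ∈ range (n + 1), C (q ^ (m * k + r) * W n k) * P (k + 1)
            + ∑ k ∈ range (n + 1), C (qint q (m * k + r) * W n k) * P k := by
          rw [← sum_add_distrib]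
          refine sum_congr rfl fun k _ => ?_
          rw [X_mul_qWhitneyBasis hq, C_mul, C_mul]; ring
      _ = ∑ k ∈ range (n + 2), C (W (n + 1) k) * P k := by
          rw [hreindex, sum_range_succ' _ (n + 1)]
          simp only [W, qWhitney2, C_add, add_mul, sum_add_distrib]
          ring

theorem qWhitney_orthogonality_second_first_general (q : ℝ) (hq : 0 < q) (m r : ℕ)
    (w : ℕ → ℕ → ℝ)
    (hw : ∀ (n : ℕ) (x : ℝ),
      ∏ i ∈ Finset.range n, (q ^ (-((r : ℤ) + i * m)) * (x - qint q ((r : ℤ) + i * m))) =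
        ∑ k ∈ Finset.range (n + 1), w n k * x ^ k)
    (n j : ℕ) :
    ∑ k ∈ Finset.Icc j n, qWhitney2 q m (r : ℤ) n k * w k j =
      if n = j then (1 : ℝ) else 0 := by
  have hbasis (k : ℕ) : qWhitneyBasis q m r k = ∑ i ∈ range (k + 1), C (w k i) * X ^ i :=
    Polynomial.funext fun x => by
      simp only [qWhitneyBasis, eval_prod, eval_mul, eval_C, eval_sub, eval_X, eval_finsetSum,
        eval_pow, hw]
  have hcoeff (k : ℕ) : (qWhitneyBasis q m r k).coeff j = if j ≤ k then w k j else 0 := by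
    simp only [hbasis, finsetSum_coeff, coeff_C_mul_X_pow, sum_ite_eq, mem_range,
      Nat.lt_succ_iff]
  have hIcc : Icc j n = (range (n + 1)).filter (j ≤ ·) := by
    ext k; simp only [mem_Icc, mem_filter, mem_range]; omega
  calc ∑ k ∈ Icc j n, qWhitney2 q m r n k * w k j
      = ∑ k ∈ range (n + 1), qWhitney2 q m r n k * (qWhitneyBasis q m r k).coeff j := by
        simp only [hIcc, sum_filter, hcoeff, mul_ite, mul_zero]
    _ = ((X : ℝ[X]) ^ n).coeff j := by
        rw [X_pow_eq_sum_qWhitney2_mul_qWhitneyBasis hq.ne' m r, finsetSum_coeff]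
        simp only [coeff_C_mul]
    _ = if n = j then 1 else 0 := by rw [coeff_X_pow]; exact if_congr eq_comm rfl rfl

theorem qWhitney_orthogonality_second_first (q : ℝ) (hq : 0 < q) (hq1 : q ≠ 1) (m r : ℕ) (hm : 0 < m) (hr : 0 < r)
    (w : ℕ → ℕ → ℝ)
    (hw : ∀ (n : ℕ) (x : ℝ),
      ∏ i ∈ Finset.range n, (q ^ (-((r : ℤ) + i * m)) * (x - qint q ((r : ℤ) + i * m))) =
        ∑ k ∈ Finset.range (n + 1), w n k * x ^ k)
    (n j : ℕ) (hjn : j ≤ n) :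
    ∑ k ∈ Finset.Icc j n, qWhitney2 q m (r : ℤ) n k * w k j =
      if n = j then (1 : ℝ) else 0 :=
  qWhitney_orthogonality_second_first_general q hq m r w hw n j
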